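/- Let u : 𝕋 → ℝ be bounded, continuous off the point 1 ∈ 𝕋, with u(e^{it}) > 3δ > 0 for t ∈ (0, t₀) and 0 < u(e^{−it}) < δ for t ∈ (0, t₀), for some δ, t₀ > 0. Then lim_{r→1⁻} (1/2π) ∫_𝕋 Im((e^{it}+r)/(e^{it}−r)) u(e^{it}) dt = −∞. -/

import Mathlib

/-!
With `D_r(t) = |e^{it} - r|² = 1 - 2r cos t + r²`, the integrand is `-(2r sin t / D_r(t)) u(t)`.
Folding `[-π, 0]` onto `[0, π]` turns the integral into
`∫₀^π (2r sin t / D_r(t)) (u(-t) - u(t)) dt`, whose weight is nonnegative and is the derivative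
of `log D_r`. Since `u(-t) - u(t) < -2δ` on `(0, t₀)` and `≤ 2M` elsewhere (`|u| ≤ M`), the integral
is at most `4δ log (1 - r)` plus a term that stays bounded as `r → 1⁻`, because `D_r(0) = (1 - r)²`.
-/

open Set Filter Real MeasureTheory intervalIntegral
open Topology

theorem im_exp_add_div_exp_sub (r t : ℝ) :
    ((Complex.exp (t * Complex.I) + r) / (Complex.exp (t * Complex.I) - r)).im
      = -(2 * r * sin t / (1 - 2 * r * cos t + r ^ 2)) := by
  have hnormSq :
      Complex.normSq (Complex.exp (t * Complex.I) - r) = 1 - 2 * r * cos t + r ^ 2 := by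
    rw [Complex.normSq_apply]
    simp only [Complex.sub_re, Complex.sub_im, Complex.exp_ofReal_mul_I_re,
      Complex.exp_ofReal_mul_I_im, Complex.ofReal_re, Complex.ofReal_im]
    nlinarith [sin_sq_add_cos_sq t]
  rw [Complex.div_im, hnormSq]
  simp only [Complex.add_re, Complex.add_im, Complex.sub_re, Complex.sub_im,
    Complex.exp_ofReal_mul_I_re, Complex.exp_ofReal_mul_I_im, Complex.ofReal_re,
    Complex.ofReal_im]
  ring

theorem one_sub_two_mul_cos_add_sq_pos {r : ℝ} (hr : |r| < 1) (t : ℝ) :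
    0 < 1 - 2 * r * cos t + r ^ 2 := by
  have hrcos : r * cos t ≤ |r| := by
    calc r * cos t ≤ |r * cos t| := le_abs_self _
      _ = |r| * |cos t| := abs_mul _ _
      _ ≤ |r| := mul_le_of_le_one_right (abs_nonneg r) (abs_cos_le_one t)
  nlinarith [sq_abs r, abs_nonneg r]

theorem integral_two_mul_sin_div {r : ℝ} (hr : |r| < 1) (a b : ℝ) :
    ∫ t in a..b, 2 * r * sin t / (1 - 2 * r * cos t + r ^ 2)
      = log (1 - 2 * r * cos b + r ^ 2) - log (1 - 2 * r * cos a + r ^ 2) := by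
  have hpos := one_sub_two_mul_cos_add_sq_pos hr
  have hderiv (t : ℝ) : HasDerivAt (fun s => log (1 - 2 * r * cos s + r ^ 2))
      (2 * r * sin t / (1 - 2 * r * cos t + r ^ 2)) t := by
    have hD : HasDerivAt (fun s => 1 - 2 * r * cos s + r ^ 2) (2 * r * sin t) t := by
      simpa using (((hasDerivAt_cos t).const_mul (2 * r)).const_sub 1).add_const (r ^ 2)
    exact hD.log (hpos t).ne'
  exact integral_eq_sub_of_hasDerivAt (fun t _ => hderiv t)
    ((Continuous.div (by fun_prop) (by fun_prop) fun t => (hpos t).ne').intervalIntegrable _ _)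

theorem Function.Periodic.intervalIntegrable_of_continuousOn_Ioo {E : Type*}
    [NormedAddCommGroup E] {u : ℝ → E} {T M : ℝ} (hper : Function.Periodic u T) (hT : 0 < T)
    (hcont : ContinuousOn u (Ioo 0 T)) (hbd : ∀ t, ‖u t‖ ≤ M) (a b : ℝ) :
    IntervalIntegrable u volume a b := by
  refine hper.intervalIntegrable₀ hT.ne' ?_ a b
  rw [intervalIntegrable_iff_integrableOn_Ioc_of_le hT.le]
  refine ⟨?_, .restrict_of_bounded (C := M) measure_Ioc_lt_top (ae_of_all _ hbd)⟩
  rw [← Measure.restrict_congr_set Ioo_ae_eq_Ioc]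
  exact hcont.aestronglyMeasurable measurableSet_Ioo

theorem integral_neg_eq_integral_zero_add {E : Type*} [NormedAddCommGroup E] [NormedSpace ℝ E]
    {g : ℝ → E} {a : ℝ} (hg : IntervalIntegrable g volume (-a) a) :
    ∫ t in (-a)..a, g t = ∫ t in 0..a, (g (-t) + g t) := by
  have h0 : (0 : ℝ) ∈ uIcc (-a) a := by
    rcases le_total 0 a with h | h
    · exact mem_uIcc.2 (Or.inl ⟨by linarith, h⟩)
    · exact mem_uIcc.2 (Or.inr ⟨h, by linarith⟩)
  have hleft : IntervalIntegrable g volume (-a) 0 := hg.mono_set (uIcc_subset_uIcc_left h0)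
  have hright : IntervalIntegrable g volume 0 a := hg.mono_set (uIcc_subset_uIcc_right h0)
  have hleft' : IntervalIntegrable (fun t => g (-t)) volume 0 a := by
    simpa using ((IntervalIntegrable.iff_comp_neg).mp hleft).symm
  rw [integral_add hleft' hright, integral_comp_neg, neg_zero,
    integral_add_adjacent_intervals hleft hright]

theorem integral_two_mul_sin_div_mul_le {r c M t₀ : ℝ} {v : ℝ → ℝ} (hr₀ : 0 ≤ r) (hr₁ : r < 1)
    (ht₀ : 0 ≤ t₀) (ht₀π : t₀ ≤ π) (hv : IntervalIntegrable v volume 0 π)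
    (hvc : ∀ t ∈ Ioo 0 t₀, v t ≤ -c) (hvM : ∀ t ∈ Ioo t₀ π, v t ≤ M) :
    ∫ t in 0..π, 2 * r * sin t / (1 - 2 * r * cos t + r ^ 2) * v t
      ≤ -c * (log (1 - 2 * r * cos t₀ + r ^ 2) - 2 * log (1 - r))
        + M * (2 * log (1 + r) - log (1 - 2 * r * cos t₀ + r ^ 2)) := by
  have hr : |r| < 1 := abs_lt.2 ⟨by linarith, hr₁⟩
  set P : ℝ → ℝ := fun t => 2 * r * sin t / (1 - 2 * r * cos t + r ^ 2) with hP_def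
  have hP_cont : Continuous P :=
    Continuous.div (by fun_prop) (by fun_prop) fun t => (one_sub_two_mul_cos_add_sq_pos hr t).ne'
  have hP_nonneg : ∀ t ∈ Icc 0 π, 0 ≤ P t := fun t ht =>
    div_nonneg (mul_nonneg (by positivity) (sin_nonneg_of_nonneg_of_le_pi ht.1 ht.2))
      (one_sub_two_mul_cos_add_sq_pos hr t).le
  have hPv : IntervalIntegrable (fun t => P t * v t) volume 0 π :=
    hv.continuousOn_mul hP_cont.continuousOn
  have hPv₁ : IntervalIntegrable (fun t => P t * v t) volume 0 t₀ :=
    hPv.mono_set (uIcc_subset_uIcc_left (mem_uIcc.2 (Or.inl ⟨ht₀, ht₀π⟩)))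
  have hPv₂ : IntervalIntegrable (fun t => P t * v t) volume t₀ π :=
    hPv.mono_set (uIcc_subset_uIcc_right (mem_uIcc.2 (Or.inl ⟨ht₀, ht₀π⟩)))
  have h₁ : ∫ t in 0..t₀, P t * v t ≤ ∫ t in 0..t₀, P t * -c :=
    integral_mono_on_of_le_Ioo ht₀ hPv₁ (hP_cont.intervalIntegrable _ _ |>.mul_const _)
      fun t ht => mul_le_mul_of_nonneg_left (hvc t ht)
        (hP_nonneg t ⟨ht.1.le, ht.2.le.trans ht₀π⟩)
  have h₂ : ∫ t in t₀..π, P t * v t ≤ ∫ t in t₀..π, P t * M :=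
    integral_mono_on_of_le_Ioo ht₀π hPv₂ (hP_cont.intervalIntegrable _ _ |>.mul_const _)
      fun t ht => mul_le_mul_of_nonneg_left (hvM t ht)
        (hP_nonneg t ⟨ht₀.trans ht.1.le, ht.2.le⟩)
  have hlog₀ : log (1 - 2 * r * cos 0 + r ^ 2) = 2 * log (1 - r) := by
    rw [cos_zero, show 1 - 2 * r * 1 + r ^ 2 = (1 - r) ^ 2 by ring, log_pow]; norm_num
  have hlogπ : log (1 - 2 * r * cos π + r ^ 2) = 2 * log (1 + r) := by
    rw [cos_pi, show 1 - 2 * r * -1 + r ^ 2 = (1 + r) ^ 2 by ring, log_pow]; norm_num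
  rw [← integral_add_adjacent_intervals hPv₁ hPv₂]
  rw [intervalIntegral.integral_mul_const, hP_def, integral_two_mul_sin_div hr, hlog₀] at h₁
  rw [intervalIntegral.integral_mul_const, hP_def, integral_two_mul_sin_div hr, hlogπ] at h₂
  linarith

theorem integral_im_exp_add_div_exp_sub_mul_le {u : ℝ → ℝ} {r δ M t₀ : ℝ} (hr₀ : 0 ≤ r)
    (hr₁ : r < 1) (ht₀ : 0 ≤ t₀) (ht₀π : t₀ ≤ π) (hu : IntervalIntegrable u volume (-π) π)
    (hM : ∀ t, |u t| ≤ M) (hbig : ∀ t ∈ Ioo 0 t₀, 3 * δ < u t)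
    (hsmall : ∀ t ∈ Ioo 0 t₀, u (-t) < δ) :
    ∫ t in (-π)..π,
        ((Complex.exp (t * Complex.I) + r) / (Complex.exp (t * Complex.I) - r)).im * u t
      ≤ -(2 * δ) * (log (1 - 2 * r * cos t₀ + r ^ 2) - 2 * log (1 - r))
        + 2 * M * (2 * log (1 + r) - log (1 - 2 * r * cos t₀ + r ^ 2)) := by
  have hr : |r| < 1 := abs_lt.2 ⟨by linarith, hr₁⟩
  simp_rw [im_exp_add_div_exp_sub]
  have hpos := one_sub_two_mul_cos_add_sq_pos hr
  have hkernel : Continuous fun t => -(2 * r * sin t / (1 - 2 * r * cos t + r ^ 2)) :=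
    (Continuous.div (by fun_prop) (by fun_prop) fun t => (hpos t).ne').neg
  have hint : IntervalIntegrable
      (fun t => -(2 * r * sin t / (1 - 2 * r * cos t + r ^ 2)) * u t) volume (-π) π :=
    hu.continuousOn_mul hkernel.continuousOn
  have hπ : (0 : ℝ) ∈ uIcc (-π) π := mem_uIcc.2 (Or.inl ⟨by linarith [pi_pos], pi_pos.le⟩)
  have hv : IntervalIntegrable (fun t => u (-t) - u t) volume 0 π := by
    refine .sub ?_ (hu.mono_set (uIcc_subset_uIcc_right hπ))
    have hleft := hu.mono_set (uIcc_subset_uIcc_left hπ)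
    simpa using ((IntervalIntegrable.iff_comp_neg).mp hleft).symm
  rw [integral_neg_eq_integral_zero_add hint]
  calc _ = ∫ t in 0..π, 2 * r * sin t / (1 - 2 * r * cos t + r ^ 2) * (u (-t) - u t) :=
        integral_congr fun t _ => by simp only [sin_neg, cos_neg]; ring
    _ ≤ _ := integral_two_mul_sin_div_mul_le hr₀ hr₁ ht₀ ht₀π hv
        (fun t ht => by linarith [hbig t ht, hsmall t ht])
        (fun t _ => by linarith [(abs_le.1 (hM t)).1, (abs_le.1 (hM (-t))).2])

theorem tendsto_mul_log_one_sub_add_atBot {a : ℝ} {g : ℝ → ℝ} (ha : 0 < a)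
    (hg : ContinuousAt g 1) :
    Tendsto (fun r => a * log (1 - r) + g r) (𝓝[<] 1) atBot := by
  have h : Tendsto (fun r : ℝ => 1 - r) (𝓝[<] 1) (𝓝[>] 0) := by
    have hcont : Continuous fun r : ℝ => 1 - r := by fun_prop
    refine tendsto_nhdsWithin_iff.2 ⟨?_, eventually_nhdsWithin_of_forall fun r (hr : r < 1) => ?_⟩
    · simpa using (hcont.tendsto 1).mono_left nhdsWithin_le_nhds
    · exact sub_pos.2 hr
  exact ((tendsto_log_nhdsGT_zero.comp h).const_mul_atBot ha).atBot_add
    (hg.tendsto.mono_left nhdsWithin_le_nhds)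

theorem stmt_12 (u : ℝ → ℝ) (hper : Function.Periodic u (2 * π))
    -- `u` continuous on the circle off the point `1` :
    (hcont : ContinuousOn u (Set.Ioo 0 (2 * π)))
    (hbd : ∃ M : ℝ, ∀ t, |u t| ≤ M)
    (δ t₀ : ℝ) (hδ : 0 < δ) (ht₀ : 0 < t₀) (ht₀' : t₀ < π)
    (hbig : ∀ t ∈ Set.Ioo 0 t₀, 3 * δ < u t)
    (hsmall : ∀ t ∈ Set.Ioo 0 t₀, 0 < u (-t) ∧ u (-t) < δ) :
    Tendsto (fun r : ℝ => (2 * π)⁻¹ *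
        ∫ t in (-π)..π,
          ((Complex.exp (t * Complex.I) + (r:ℂ)) /
            (Complex.exp (t * Complex.I) - (r:ℂ))).im * u t)
      (nhdsWithin 1 (Set.Iio 1)) atBot := by
  obtain ⟨M, hM⟩ := hbd
  have hu : IntervalIntegrable u volume (-π) π :=
    hper.intervalIntegrable_of_continuousOn_Ioo two_pi_pos hcont hM (-π) π
  have hcos : cos t₀ < 1 := by
    simpa using cos_lt_cos_of_nonneg_of_le_pi le_rfl ht₀'.le ht₀
  have hg : ContinuousAt
      (fun r : ℝ => -(2 * δ + 2 * M) * log (1 - 2 * r * cos t₀ + r ^ 2) + 4 * M * log (1 + r)) 1 :=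
    by fun_prop (disch := norm_num <;> linarith)
  refine tendsto_atBot_mono' _ ?_
    ((tendsto_mul_log_one_sub_add_atBot (by positivity : 0 < 4 * δ) hg).const_mul_atBot
      (inv_pos.2 two_pi_pos))
  filter_upwards [Ioo_mem_nhdsLT zero_lt_one] with r hr
  have hbound := integral_im_exp_add_div_exp_sub_mul_le hr.1.le hr.2 ht₀.le ht₀'.le hu hM hbig
    fun t ht => (hsmall t ht).2
  gcongr
  linarith
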